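/- Let C_1,…,C_K and D_1,…,D_K be Hermitian positive definite matrices in ℂ^{m×m}, let ρ > 0, μ ≥ 0, τ > 0, α₁ > 0, α₂ > 0 be real constants, and let w ∈ ℂ^m be nonzero. Define L̃(w) = ρ · Σ_{k=1}^K log₂( (w^H C_k w)/(w^H D_k w) ) − (μ/τ) · [ (1/α₁) · log( Σ_{i=1}^m exp(α₁ |w_i|²) ) + α₂ · log( Σ_{i=1}^m exp(−|w_i|² / α₂) ) ]. Then L̃ is Fréchet differentiable at w over ℝ, and w is a critical point of L̃ (the derivative at w is the zero map) if and only if (ρ / ln 2) · Σ_{k=1}^K ( C_k w / (w^H C_k w) − D_k w / (w^H D_k w) ) − (μ/τ) · ( Σ_{i=1}^m exp(α₁ |w_i|²) · X_i w ) / ( Σ_{i=1}^m exp(α₁ |w_i|²) ) + (μ/τ) · ( Σ_{i=1}^m exp(−|w_i|²/α₂) · X_i w ) / ( Σ_{i=1}^m exp(−|w_i|²/α₂) ) = 0, where X_i w denotes the vector whose i-th entry is w_i and whose other entries are 0. -/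

import Mathlib

/-!
Over `ℝ`, every derivative occurring here is a functional `v ↦ Re (eᴴ v)`, and `e` is determined
by it. The quadratic form `gᴴ A g` of a Hermitian `A` has gradient `2 A w`, and `|g_i|²` has
gradient `2 X_i w`; the chain rule through `log`, `logb` and log-sum-exp then shows that the
derivative of `L̃` at `w` is `v ↦ Re (eᴴ v)` with `e` twice the displayed vector.
-/

open Matrix ComplexOrder

theorem HasFDerivAt.log_sum_exp {E ι : Type*} [NormedAddCommGroup E] [NormedSpace ℝ E]
    [Fintype ι] [Nonempty ι] {f : ι → E → ℝ} {f' : ι → E →L[ℝ] ℝ} {x : E}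
    (hf : ∀ i, HasFDerivAt (f i) (f' i) x) :
    HasFDerivAt (fun y => Real.log (∑ i, Real.exp (f i y)))
      ((∑ i, Real.exp (f i x))⁻¹ • ∑ i, Real.exp (f i x) • f' i) x :=
  (HasFDerivAt.fun_sum fun i _ => (hf i).exp).log
    (Finset.sum_pos (fun _ _ => Real.exp_pos _) Finset.univ_nonempty).ne'

section
variable {ι : Type*} [Fintype ι]

noncomputable def reDotProductCLM : (ι → ℂ) →L[ℝ] (ι → ℂ) →L[ℝ] ℝ :=
  LinearMap.toContinuousLinearMap <| LinearMap.toContinuousLinearMap.toLinearMap ∘ₗ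
    LinearMap.mk₂ ℝ (fun e v => (star e ⬝ᵥ v).re)
      (fun _ _ _ => by simp [add_dotProduct]) (fun _ _ _ => by simp [Complex.real_smul])
      (fun _ _ _ => by simp [dotProduct_add]) (fun _ _ _ => by simp [Complex.real_smul])

@[simp] lemma reDotProductCLM_apply (e v : ι → ℂ) :
    reDotProductCLM e v = (star e ⬝ᵥ v).re := rfl

lemma reDotProductCLM_eq_zero_iff {e : ι → ℂ} : reDotProductCLM e = 0 ↔ e = 0 := by
  refine ⟨fun he => ?_, fun he => by rw [he, map_zero]⟩
  have hre : (star e ⬝ᵥ e).re = 0 := by simpa using congr($he e)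
  rw [← dotProduct_star_self_eq_zero]
  exact Complex.ext hre (Complex.nonneg_iff.mp (dotProduct_star_self_nonneg e)).2.symm

namespace Matrix.IsHermitian
variable {A : Matrix ι ι ℂ}

lemma ofReal_re_star_dotProduct_mulVec (hA : A.IsHermitian) (g : ι → ℂ) :
    ((star g ⬝ᵥ A *ᵥ g).re : ℂ) = star g ⬝ᵥ A *ᵥ g :=
  Complex.ext rfl (by simpa using (hA.im_star_dotProduct_mulVec_self g).symm)

lemma hasFDerivAt_re_dotProduct_mulVec (hA : A.IsHermitian) (w : ι → ℂ) :
    HasFDerivAt (fun g => (star g ⬝ᵥ A *ᵥ g).re) (2 • reDotProductCLM (A *ᵥ w)) w := by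
  have hAv := (A.mulVecLin.restrictScalars ℝ).toContinuousLinearMap.hasFDerivAt (x := w)
  refine (reDotProductCLM.hasFDerivAt_of_bilinear (hasFDerivAt_id w) hAv).congr_fderiv ?_
  ext v
  have h₁ : star w ⬝ᵥ A *ᵥ v = star (A *ᵥ w) ⬝ᵥ v := by
    rw [star_mulVec, hA.eq, dotProduct_mulVec]
  have h₂ : star (star v ⬝ᵥ A *ᵥ w) = star (A *ᵥ w) ⬝ᵥ v := by
    rw [star_dotProduct, star_star]
  simp [h₁, ← h₂, two_smul]

lemma hasFDerivAt_log_re_dotProduct_mulVec (hA : A.IsHermitian) {w : ι → ℂ}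
    (hw : (star w ⬝ᵥ A *ᵥ w).re ≠ 0) :
    HasFDerivAt (fun g => Real.log (star g ⬝ᵥ A *ᵥ g).re)
      (2 • reDotProductCLM ((star w ⬝ᵥ A *ᵥ w)⁻¹ • (A *ᵥ w))) w := by
  refine ((hA.hasFDerivAt_re_dotProduct_mulVec w).log hw).congr_fderiv ?_
  rw [← hA.ofReal_re_star_dotProduct_mulVec, ← Complex.ofReal_inv, Complex.coe_smul, map_smul,
    smul_comm, Complex.ofReal_re]

end Matrix.IsHermitian

lemma hasFDerivAt_logb_re_div {A B : Matrix ι ι ℂ} (hA : A.IsHermitian) (hB : B.IsHermitian)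
    {w : ι → ℂ} (hwA : 0 < (star w ⬝ᵥ A *ᵥ w).re) (hwB : 0 < (star w ⬝ᵥ B *ᵥ w).re) :
    HasFDerivAt (fun g => Real.logb 2 ((star g ⬝ᵥ A *ᵥ g) / (star g ⬝ᵥ B *ᵥ g)).re)
      (2 • reDotProductCLM ((Real.log 2)⁻¹ •
        ((star w ⬝ᵥ A *ᵥ w)⁻¹ • (A *ᵥ w) - (star w ⬝ᵥ B *ᵥ w)⁻¹ • (B *ᵥ w)))) w := by
  have hA' := hA.hasFDerivAt_re_dotProduct_mulVec w
  have hB' := hB.hasFDerivAt_re_dotProduct_mulVec w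
  have hlog : (fun g => Real.logb 2 ((star g ⬝ᵥ A *ᵥ g) / (star g ⬝ᵥ B *ᵥ g)).re) =ᶠ[nhds w]
      fun g => (Real.log 2)⁻¹ *
        (Real.log (star g ⬝ᵥ A *ᵥ g).re - Real.log (star g ⬝ᵥ B *ᵥ g).re) := by
    filter_upwards [hA'.continuousAt.eventually (lt_mem_nhds hwA),
      hB'.continuousAt.eventually (lt_mem_nhds hwB)] with g hgA hgB
    rw [← hB.ofReal_re_star_dotProduct_mulVec, Complex.div_ofReal_re, Complex.ofReal_re,
      Real.logb, Real.log_div hgA.ne' hgB.ne', div_eq_inv_mul]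
  have hdiff := ((hA.hasFDerivAt_log_re_dotProduct_mulVec hwA.ne').sub
    (hB.hasFDerivAt_log_re_dotProduct_mulVec hwB.ne')).const_mul (Real.log 2)⁻¹
  refine (hdiff.congr_of_eventuallyEq hlog).congr_fderiv ?_
  simp only [map_smul, map_sub]
  module

variable [DecidableEq ι]

lemma hasFDerivAt_norm_apply_sq (w : ι → ℂ) (i : ι) :
    HasFDerivAt (fun g : ι → ℂ => ‖g i‖ ^ 2) (2 • reDotProductCLM (Pi.single i (w i))) w := by
  refine (hasFDerivAt_apply i w).norm_sq.congr_fderiv ?_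
  ext v
  simp [Complex.inner, mul_comm]

lemma hasFDerivAt_mul_log_sum_exp_mul_norm_sq [Nonempty ι] (a b : ℝ) (w : ι → ℂ) :
    HasFDerivAt (fun g : ι → ℂ => a * Real.log (∑ i, Real.exp (b * ‖g i‖ ^ 2)))
      ((2 * a * b) • reDotProductCLM ((∑ i, Real.exp (b * ‖w i‖ ^ 2))⁻¹ •
        ∑ i, Real.exp (b * ‖w i‖ ^ 2) • Pi.single i (w i))) w := by
  refine ((HasFDerivAt.log_sum_exp fun i =>
    (hasFDerivAt_norm_apply_sq w i).const_mul b).const_mul a).congr_fderiv ?_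
  simp only [map_smul, map_sum, Finset.smul_sum]
  exact Finset.sum_congr rfl fun _ _ => by module

end

theorem stmt14_general {m K : ℕ} (C D : Fin K → Matrix (Fin m) (Fin m) ℂ)
    (hC : ∀ k, (C k).PosDef) (hD : ∀ k, (D k).PosDef)
    (ρ μ τ α₁ α₂ : ℝ)
    (hα₁ : 0 < α₁) (hα₂ : 0 < α₂)
    (w : Fin m → ℂ) (hw : w ≠ 0) :
    let Lt : (Fin m → ℂ) → ℝ := fun g =>
      ρ * (∑ k, Real.logb 2 (((star g ⬝ᵥ (C k) *ᵥ g) / (star g ⬝ᵥ (D k) *ᵥ g)).re))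
        - (μ / τ) * ((1 / α₁) * Real.log (∑ i, Real.exp (α₁ * ‖g i‖ ^ 2))
            + α₂ * Real.log (∑ i, Real.exp (-‖g i‖ ^ 2 / α₂)))
    DifferentiableAt ℝ Lt w ∧
      (fderiv ℝ Lt w = 0 ↔
        (ρ / Real.log 2) • (∑ k, ((star w ⬝ᵥ (C k) *ᵥ w)⁻¹ • ((C k) *ᵥ w)
              - (star w ⬝ᵥ (D k) *ᵥ w)⁻¹ • ((D k) *ᵥ w)))
          - (μ / τ) • ((∑ i, Real.exp (α₁ * ‖w i‖ ^ 2))⁻¹ •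
              ∑ i, Real.exp (α₁ * ‖w i‖ ^ 2) •
                (fun j => if j = i then w i else 0 : Fin m → ℂ))
          + (μ / τ) • ((∑ i, Real.exp (-‖w i‖ ^ 2 / α₂))⁻¹ •
              ∑ i, Real.exp (-‖w i‖ ^ 2 / α₂) •
                (fun j => if j = i then w i else 0 : Fin m → ℂ))
          = 0) := by
  have : Nonempty (Fin m) := ⟨(Function.ne_iff.mp hw).choose⟩
  have hexp : ∀ x : ℝ, -x / α₂ = -α₂⁻¹ * x := fun x => by ring
  simp only [hexp, ← Pi.single_apply]
  have hderiv := ((HasFDerivAt.fun_sum fun k (_ : k ∈ Finset.univ) =>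
      hasFDerivAt_logb_re_div (hC k).isHermitian (hD k).isHermitian ((hC k).re_dotProduct_pos hw)
        ((hD k).re_dotProduct_pos hw)).const_mul ρ).fun_sub
    (((hasFDerivAt_mul_log_sum_exp_mul_norm_sq (1 / α₁) α₁ w).fun_add
      (hasFDerivAt_mul_log_sum_exp_mul_norm_sq α₂ (-α₂⁻¹) w)).const_mul (μ / τ))
  refine ⟨hderiv.differentiableAt, ?_⟩
  rw [hderiv.fderiv]
  refine Iff.trans ?_
    ((smul_eq_zero_iff_right (two_ne_zero' ℝ)).trans reDotProductCLM_eq_zero_iff)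
  convert Iff.rfl using 2
  have h₁ : 2 * (1 / α₁) * α₁ = 2 := by field_simp [hα₁.ne']
  have h₂ : 2 * α₂ * -α₂⁻¹ = -2 := by field_simp [hα₂.ne']
  simp only [map_smul, map_sum, map_sub, map_add, ← Finset.smul_sum, h₁, h₂]
  module

theorem stmt14 {m K : ℕ} (C D : Fin K → Matrix (Fin m) (Fin m) ℂ)
    (hC : ∀ k, (C k).PosDef) (hD : ∀ k, (D k).PosDef)
    (ρ μ τ α₁ α₂ : ℝ) (hρ : 0 < ρ) (hμ : 0 ≤ μ) (hτ : 0 < τ)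
    (hα₁ : 0 < α₁) (hα₂ : 0 < α₂)
    (w : Fin m → ℂ) (hw : w ≠ 0) :
    let Lt : (Fin m → ℂ) → ℝ := fun g =>
      ρ * (∑ k, Real.logb 2 (((star g ⬝ᵥ (C k) *ᵥ g) / (star g ⬝ᵥ (D k) *ᵥ g)).re))
        - (μ / τ) * ((1 / α₁) * Real.log (∑ i, Real.exp (α₁ * ‖g i‖ ^ 2))
            + α₂ * Real.log (∑ i, Real.exp (-‖g i‖ ^ 2 / α₂)))
    DifferentiableAt ℝ Lt w ∧
      (fderiv ℝ Lt w = 0 ↔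
        (ρ / Real.log 2) • (∑ k, ((star w ⬝ᵥ (C k) *ᵥ w)⁻¹ • ((C k) *ᵥ w)
              - (star w ⬝ᵥ (D k) *ᵥ w)⁻¹ • ((D k) *ᵥ w)))
          - (μ / τ) • ((∑ i, Real.exp (α₁ * ‖w i‖ ^ 2))⁻¹ •
              ∑ i, Real.exp (α₁ * ‖w i‖ ^ 2) •
                (fun j => if j = i then w i else 0 : Fin m → ℂ))
          + (μ / τ) • ((∑ i, Real.exp (-‖w i‖ ^ 2 / α₂))⁻¹ •
              ∑ i, Real.exp (-‖w i‖ ^ 2 / α₂) •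
                (fun j => if j = i then w i else 0 : Fin m → ℂ))
          = 0) :=
  stmt14_general C D hC hD ρ μ τ α₁ α₂ hα₁ hα₂ w hw
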